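/- For every integer k ≥ 3, the set B = {b_S : ∅ ≠ S ⊆ A} is a resolving set of the graph G_k. -/
import Mathlib


open SimpleGraph

/-- `W` is a resolving set of `G`: every pair of distinct vertices is
distinguished by its distance to some vertex of `W`. -/
def IsResolving {V : Type*} (G : SimpleGraph V) (W : Set V) : Prop :=
  ∀ x y : V, x ≠ y → ∃ z ∈ W, G.dist x z ≠ G.dist y z

/-- The metric dimension of `G`: the minimum cardinality of a resolving set. -/
noncomputable def metricDim {V : Type*} (G : SimpleGraph V) : ℕ :=
  sInf {n | ∃ W : Set V, W.ncard = n ∧ IsResolving G W}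

/-- The vertex set of `G_k`: the set `A` (a copy of `Fin k`), the set
`B = {b_S : ∅ ≠ S ⊆ A}` and the set `C = {c_S : ∅ ≠ S ⊆ A}`. -/
abbrev GkVert (k : ℕ) :=
  Fin k ⊕ ({S : Finset (Fin k) // S.Nonempty} ⊕ {S : Finset (Fin k) // S.Nonempty})

/-- The relation generating the edges of `G_k`: each of `A`, `B`, `C` is a clique,
`b_S` is adjacent to exactly the vertices of `A` in `S`, and `b_S` is adjacent to `c_S`. -/
def GkRel (k : ℕ) : GkVert k → GkVert k → Prop
  | Sum.inl _, Sum.inl _ => True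
  | Sum.inl a, Sum.inr (Sum.inl S) => a ∈ S.val
  | Sum.inr (Sum.inl _), Sum.inr (Sum.inl _) => True
  | Sum.inr (Sum.inl S), Sum.inr (Sum.inr T) => S = T
  | Sum.inr (Sum.inr _), Sum.inr (Sum.inr _) => True
  | _, _ => False

/-- The graph `G_k` from Definition 3.5. -/
def Gk (k : ℕ) : SimpleGraph (GkVert k) := SimpleGraph.fromRel (GkRel k)


namespace GkAux

variable {k : ℕ}

abbrev bS (S : {S : Finset (Fin k) // S.Nonempty}) : GkVert k := Sum.inr (Sum.inl S)
abbrev cS (S : {S : Finset (Fin k) // S.Nonempty}) : GkVert k := Sum.inr (Sum.inr S)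

lemma adj_a_b (a : Fin k) (S : {S : Finset (Fin k) // S.Nonempty}) :
    (Gk k).Adj (Sum.inl a) (bS S) ↔ a ∈ S.val := by
  simp [Gk, SimpleGraph.fromRel_adj, GkRel]

lemma adj_c_b (T S : {S : Finset (Fin k) // S.Nonempty}) :
    (Gk k).Adj (cS T) (bS S) ↔ S = T := by
  simp [Gk, SimpleGraph.fromRel_adj, GkRel, eq_comm]

lemma adj_b_b {S T : {S : Finset (Fin k) // S.Nonempty}} (h : S ≠ T) :
    (Gk k).Adj (bS S) (bS T) := by
  simp [Gk, SimpleGraph.fromRel_adj, GkRel, h]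

lemma reachB (S T : {S : Finset (Fin k) // S.Nonempty}) :
    (Gk k).Reachable (bS S) (bS T) := by
  by_cases h : S = T
  · subst h; rfl
  · exact (adj_b_b h).reachable

lemma reach (x : GkVert k) (S : {S : Finset (Fin k) // S.Nonempty}) :
    (Gk k).Reachable x (bS S) := by
  match x with
  | Sum.inl a =>
      refine (SimpleGraph.Adj.reachable ?_).trans
        (reachB ⟨{a}, Finset.singleton_nonempty a⟩ S)
      exact (adj_a_b a _).2 (Finset.mem_singleton_self a)
  | Sum.inr (Sum.inl T) => exact reachB T S
  | Sum.inr (Sum.inr T) =>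
      exact (SimpleGraph.Adj.reachable ((adj_c_b T T).2 rfl)).trans (reachB T S)

lemma dist_ne_zero {x : GkVert k} {S : {S : Finset (Fin k) // S.Nonempty}}
    (h : x ≠ bS S) : (Gk k).dist x (bS S) ≠ 0 := by
  rw [Ne, SimpleGraph.dist_eq_zero_iff_eq_or_not_reachable]
  push_neg
  exact ⟨h, reach x S⟩

end GkAux

open GkAux in
/-- For `k ≥ 3`, the set `B = {b_S : ∅ ≠ S ⊆ A}` is a resolving set of `G_k`. -/
theorem B_resolving_Gk (k : ℕ) (hk : 3 ≤ k) :
    IsResolving (Gk k)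
      (Set.range (fun S : {S : Finset (Fin k) // S.Nonempty} =>
        (Sum.inr (Sum.inl S) : GkVert k))) := by
  intro x y hxy
  -- helper to produce membership
  have mem : ∀ S : {S : Finset (Fin k) // S.Nonempty},
      (bS S : GkVert k) ∈ Set.range (fun S : {S : Finset (Fin k) // S.Nonempty} =>
        (Sum.inr (Sum.inl S) : GkVert k)) := fun S => ⟨S, rfl⟩
  -- case by constructors
  match x, y, hxy with
  | Sum.inl a, Sum.inl a', hxy =>
      have ha : a ≠ a' := fun h => hxy (by rw [h])
      refine ⟨bS ⟨{a}, Finset.singleton_nonempty a⟩, mem _, ?_⟩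
      rw [SimpleGraph.dist_eq_one_iff_adj.2 ((adj_a_b a _).2 (Finset.mem_singleton_self a))]
      intro h
      have := (adj_a_b a' _).1 (SimpleGraph.dist_eq_one_iff_adj.1 h.symm)
      simp at this
      exact ha this.symm
  | Sum.inl a, Sum.inr (Sum.inl T), _ =>
      refine ⟨bS T, mem _, ?_⟩
      rw [SimpleGraph.dist_self]
      exact dist_ne_zero (by simp)
  | Sum.inl a, Sum.inr (Sum.inr T), _ =>
      -- choose S containing a with S ≠ T
      obtain ⟨S, haS, hST⟩ : ∃ S : {S : Finset (Fin k) // S.Nonempty}, a ∈ S.val ∧ S ≠ T := by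
        by_cases h : T = ⟨{a}, Finset.singleton_nonempty a⟩
        · haveI : Nonempty (Fin k) := ⟨a⟩
          refine ⟨⟨Finset.univ, Finset.univ_nonempty⟩, Finset.mem_univ a, ?_⟩
          intro he
          have : ({a} : Finset (Fin k)) = Finset.univ := by
            have := congrArg Subtype.val (he.trans h)
            simpa using this.symm
          have hcard := congrArg Finset.card this
          simp [Finset.card_univ] at hcard
          omega
        · exact ⟨⟨{a}, Finset.singleton_nonempty a⟩, Finset.mem_singleton_self a, fun he => h he.symm⟩
      refine ⟨bS S, mem _, ?_⟩
      rw [SimpleGraph.dist_eq_one_iff_adj.2 ((adj_a_b a S).2 haS)]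
      intro h
      exact hST ((adj_c_b T S).1 (SimpleGraph.dist_eq_one_iff_adj.1 h.symm))
  | Sum.inr (Sum.inl S), Sum.inl a, _ =>
      refine ⟨bS S, mem _, ?_⟩
      rw [SimpleGraph.dist_self]
      exact (dist_ne_zero (by simp)).symm
  | Sum.inr (Sum.inl S), Sum.inr (Sum.inl T), hxy =>
      refine ⟨bS S, mem _, ?_⟩
      rw [SimpleGraph.dist_self]
      exact (dist_ne_zero fun h => hxy h.symm).symm
  | Sum.inr (Sum.inl S), Sum.inr (Sum.inr T), _ =>
      refine ⟨bS S, mem _, ?_⟩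
      rw [SimpleGraph.dist_self]
      exact (dist_ne_zero (by simp)).symm
  | Sum.inr (Sum.inr T), Sum.inl a, hxy =>
      obtain ⟨S, haS, hST⟩ : ∃ S : {S : Finset (Fin k) // S.Nonempty}, a ∈ S.val ∧ S ≠ T := by
        by_cases h : T = ⟨{a}, Finset.singleton_nonempty a⟩
        · haveI : Nonempty (Fin k) := ⟨a⟩
          refine ⟨⟨Finset.univ, Finset.univ_nonempty⟩, Finset.mem_univ a, ?_⟩
          intro he
          have : ({a} : Finset (Fin k)) = Finset.univ := by
            have := congrArg Subtype.val (he.trans h)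
            simpa using this.symm
          have hcard := congrArg Finset.card this
          simp [Finset.card_univ] at hcard
          omega
        · exact ⟨⟨{a}, Finset.singleton_nonempty a⟩, Finset.mem_singleton_self a, fun he => h he.symm⟩
      refine ⟨bS S, mem _, ?_⟩
      rw [SimpleGraph.dist_eq_one_iff_adj.2 ((adj_a_b a S).2 haS)]
      intro h
      exact hST ((adj_c_b T S).1 (SimpleGraph.dist_eq_one_iff_adj.1 h))
  | Sum.inr (Sum.inr T), Sum.inr (Sum.inl S), _ =>
      refine ⟨bS S, mem _, ?_⟩
      rw [SimpleGraph.dist_self]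
      exact dist_ne_zero (by simp)
  | Sum.inr (Sum.inr S), Sum.inr (Sum.inr T), hxy =>
      have hST : S ≠ T := fun h => hxy (by rw [h])
      refine ⟨bS S, mem _, ?_⟩
      rw [SimpleGraph.dist_eq_one_iff_adj.2 ((adj_c_b S S).2 rfl)]
      intro h
      exact hST ((adj_c_b T S).1 (SimpleGraph.dist_eq_one_iff_adj.1 h.symm))
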